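/- In the two-stage edge-selection process (REDUCE COMPONENTS), let u be the vertex with lexicographically maximal (degree(u), ID(u)) within its connected component of the selected-edges graph H. Then every neighbor of u in G lies in the same component of H as u. -/

import Mathlib

/-!
If a neighbour `w` of `u` lay outside the component of `u` in `H`, then `w` did not mark `w u`
in stage one, so `u` marks an edge `u y` in stage two with `f1 y ≠ u`. Now `y` and `f1 y` lie in
the component of `u`: the maximality of `u` there and the choice of `f1 y` among the neighbours
of `y` (one of which is `u`) give `(deg, ID)` inequalities in both directions, hence `f1 y = u`
since `ID` is injective.
-/

open scoped Classical

variable {V : Type*}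

/-- Lexicographic order on pairs `(degree, ID)`. -/
def lexLe (a b : ℕ × ℕ) : Prop := a.1 < b.1 ∨ (a.1 = b.1 ∧ a.2 ≤ b.2)

/-- The graph of all edges marked in the two-stage selection process. -/
def markedGraph (G : SimpleGraph V) (f1 : V → V) (f2 : V → Option V) : SimpleGraph V where
  Adj a b := G.Adj a b ∧ (f1 a = b ∨ f1 b = a ∨ f2 a = some b ∨ f2 b = some a)
  symm := ⟨by intro a b ⟨h, hc⟩; exact ⟨h.symm, by tauto⟩⟩
  loopless := ⟨fun a h => G.loopless.irrefl a h.1⟩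

open SimpleGraph.ConnectedComponent

theorem lexLe_antisymm {a b : ℕ × ℕ} (hab : lexLe a b) (hba : lexLe b a) : a = b := by
  unfold lexLe at hab hba
  ext <;> omega

section markedGraph

variable {G : SimpleGraph V} {f1 : V → V} {f2 : V → Option V} {v w : V}

theorem markedGraph_adj_of_f1_eq (h : G.Adj v w) (hw : f1 v = w) :
    (markedGraph G f1 f2).Adj v w :=
  ⟨h, Or.inl hw⟩

theorem markedGraph_adj_of_f2_eq (h : G.Adj v w) (hw : f2 v = some w) :
    (markedGraph G f1 f2).Adj v w :=
  ⟨h, Or.inr (Or.inr (Or.inl hw))⟩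

end markedGraph

theorem f1_eq_of_adj_of_maximal [Fintype V] {G : SimpleGraph V} [DecidableRel G.Adj]
    {ID : V → ℕ} (hID : Function.Injective ID) {f1 : V → V} {f2 : V → Option V}
    (hf1 : ∀ v : V, 0 < G.degree v → G.Adj v (f1 v) ∧
      ∀ u : V, G.Adj v u → lexLe (G.degree u, ID u) (G.degree (f1 v), ID (f1 v)))
    {u y : V}
    (hmax : ∀ x : V,
      (markedGraph G f1 f2).connectedComponentMk x = (markedGraph G f1 f2).connectedComponentMk u →
      lexLe (G.degree x, ID x) (G.degree u, ID u))
    (hy : (markedGraph G f1 f2).connectedComponentMk y = (markedGraph G f1 f2).connectedComponentMk u)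
    (hyu : G.Adj y u) :
    f1 y = u := by
  obtain ⟨hadj, hbest⟩ := hf1 y (G.degree_pos_iff_exists_adj y |>.2 ⟨u, hyu⟩)
  have hcomp : (markedGraph G f1 f2).connectedComponentMk (f1 y)
      = (markedGraph G f1 f2).connectedComponentMk u :=
    (connectedComponentMk_eq_of_adj (markedGraph_adj_of_f1_eq hadj rfl)).symm.trans hy
  exact hID (congrArg Prod.snd (lexLe_antisymm (hmax _ hcomp) (hbest u hyu)))

/-- if `u` has the lexicographically maximal `(degree, ID)` within its
component of the selected-edges graph `H`, then all neighbors of `u` in `G` lie in the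
same component of `H` as `u`. -/
theorem reduce_components_max_vertex_neighbors
    [Fintype V] (G : SimpleGraph V) [DecidableRel G.Adj]
    (ID : V → ℕ) (hID : Function.Injective ID)
    (f1 : V → V) (f2 : V → Option V)
    (hf1 : ∀ v : V, 0 < G.degree v → G.Adj v (f1 v) ∧
      ∀ u : V, G.Adj v u → lexLe (G.degree u, ID u) (G.degree (f1 v), ID (f1 v)))
    (hf2a : ∀ v u : V, f2 v = some u → G.Adj v u ∧ f1 u ≠ v)
    (hf2b : ∀ v : V, (∃ u : V, G.Adj v u ∧ f1 u ≠ v) → ∃ u : V, f2 v = some u)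
    (u : V)
    -- `u` is lexicographically maximal in its component of `H`
    (hmax : ∀ x : V,
      (markedGraph G f1 f2).connectedComponentMk x = (markedGraph G f1 f2).connectedComponentMk u →
      lexLe (G.degree x, ID x) (G.degree u, ID u)) :
    ∀ w : V, G.Adj u w →
      (markedGraph G f1 f2).connectedComponentMk w
        = (markedGraph G f1 f2).connectedComponentMk u := by
  intro w huw
  by_contra hw
  have hf1w : f1 w ≠ u := fun h =>
    hw (connectedComponentMk_eq_of_adj (markedGraph_adj_of_f1_eq huw.symm h))
  obtain ⟨y, hy⟩ := hf2b u ⟨w, huw, hf1w⟩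
  obtain ⟨huy, hf1y⟩ := hf2a u y hy
  have hyu : (markedGraph G f1 f2).connectedComponentMk y
      = (markedGraph G f1 f2).connectedComponentMk u :=
    (connectedComponentMk_eq_of_adj (markedGraph_adj_of_f2_eq huy hy)).symm
  exact hf1y (f1_eq_of_adj_of_maximal hID hf1 hmax hyu huy.symm)
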